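/- Let k be a field, V a k-vector space, and give End_k(V) the function topology. Let 𝒯 ⊆ End_k(V) be the set of triangularizable transformations of V. Then for any T ∈ End_k(V), T lies in the closure of 𝒯 if and only if for every finite-dimensional T-invariant subspace W of V, the restriction T|_W is a triangularizable transformation of W. -/

import Mathlib

universe u v

open Polynomial

/-- A linear transformation `T` is *triangularizable* if `V` has a basis `b` indexed by a
well-ordered set (with strict order `r`) such that `T (b i)` lies in the span of
`{b j : j ≤ i}` for every index `i`. -/
def Triangularizable {k : Type u} {V : Type v} [Field k] [AddCommGroup V] [Module k V]
    (T : Module.End k V) : Prop :=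
  ∃ (ι : Type v) (r : ι → ι → Prop) (b : Module.Basis ι k V),
    IsWellOrder ι r ∧ ∀ i, T (b i) ∈ Submodule.span k (⇑b '' {j | r j i ∨ j = i})

/-- The function (finite) topology on `End_k(V)`: the topology induced from the product
topology on `V → V`, where `V` carries the discrete topology. -/
def endFunctionTopology (k : Type u) (V : Type v) [Field k] [AddCommGroup V] [Module k V] :
    TopologicalSpace (Module.End k V) :=
  TopologicalSpace.induced (fun f => (f : V → V))
    (@Pi.topologicalSpace V (fun _ => V) (fun _ => ⊥))

/-!
Membership in the closure means that on every finite-dimensional subspace `U`, `T` agrees with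
some triangularizable transformation.

If `S` is triangular for a well-ordered basis `b`, every subspace `W` has an echelon basis: one
vector of `W` for each `b`-index that occurs as a leading index in `W`. When `W` is `S`-invariant,
`S` is triangular on this basis; so if `S` agrees with `T` on `W`, then `T|_W = S|_W` is
triangularizable.

Conversely, let `U ≤ E` with `f U ⊆ E`, and let `A'` be triangular on `U` and agree with `f` on
`U ∩ f⁻¹ U`. Then `(f - A') U` meets `U` trivially, so it lies in a complement `Z` of `U`; the map
equal to `f` on `U` and to `0` on `Z` is triangular on `E = (Z ∩ E) ⊕ U`, for a basis of `Z ∩ E`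
placed before the triangular basis of `U`. Applying this along `U ⊇ U ∩ T⁻¹ U ⊇ ⋯`, which
stabilises at a `T`-invariant subspace where `T` itself is triangularizable, and finally with
`E = V`, produces a triangularizable transformation agreeing with `T` on `U`.
-/

open Submodule Set

section EchelonBasis

variable {K M : Type*} [DivisionRing K] [AddCommGroup M] [Module K M]

theorem linearIndependent_of_notMem_span_image_Iio {ι : Type*} [LinearOrder ι] {v : ι → M}
    (h : ∀ i, v i ∉ span K (v '' Iio i)) : LinearIndependent K v := by
  classical
  rw [← linearIndepOn_univ_iff, linearIndepOn_iff_linearIndepOn_finset]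
  rintro t -
  induction t using Finset.induction_on_max with
  | empty => simp
  | insert a t hlt ih =>
    rw [Finset.coe_insert]
    exact ih.insert fun ha => h a (span_mono (image_mono fun x hx => hlt x hx) ha)

namespace Module.Basis

variable {ι : Type*} [LinearOrder ι] (b : Basis ι K M)

theorem eq_zero_or_exists_mem_span_image_Iic {s : Set ι} {v : M} (hv : v ∈ span K (b '' s)) :
    v = 0 ∨ ∃ j ∈ s, v ∈ span K (b '' Iic j) := by
  rw [b.mem_span_image] at hv
  rcases (b.repr v).support.eq_empty_or_nonempty with h | h
  · exact Or.inl (b.repr.map_eq_zero_iff.1 (Finsupp.support_eq_empty.1 h))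
  · exact Or.inr ⟨_, hv (Finset.max'_mem _ h), b.mem_span_image.2 fun j hj => Finset.le_max' _ j hj⟩

theorem exists_sub_smul_mem_span_image_Iio {i : ι} {v w : M} (hv : v ∈ span K (b '' Iic i))
    (hw : w ∈ span K (b '' Iic i)) (hwi : w ∉ span K (b '' Iio i)) :
    ∃ a : K, v - a • w ∈ span K (b '' Iio i) := by
  have mem_iff (x : M) (s : Set ι) : x ∈ span K (b '' s) ↔ ∀ j, b.repr x j ≠ 0 → j ∈ s := by
    simp [b.mem_span_image, subset_def]
  rw [mem_iff] at hv hw hwi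
  have hwi : b.repr w i ≠ 0 := by
    contrapose! hwi
    exact fun j hj => (hw j hj).lt_of_ne (by rintro rfl; exact hj hwi)
  refine ⟨b.repr v i / b.repr w i, (mem_iff _ _).2 fun j hj => ?_⟩
  simp only [map_sub, map_smul, Finsupp.sub_apply, Finsupp.smul_apply, smul_eq_mul] at hj
  refine lt_of_le_of_ne ?_ (by rintro rfl; exact hj (by rw [div_mul_cancel₀ _ hwi, sub_self]))
  by_cases hvj : b.repr v j = 0
  · exact hw j fun hwj => hj (by simp [hvj, hwj])
  · exact hv j hvj

theorem exists_echelon [WellFoundedLT ι] (W : Submodule K M) :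
    ∃ (N : Set ι) (w : N → M), LinearIndependent K w ∧
      ∀ i, W ⊓ span K (b '' Iic i) = span K (w '' {n | (n : ι) ≤ i}) := by
  set N := {i | ∃ v ∈ W ⊓ span K (b '' Iic i), v ∉ span K (b '' Iio i)}
  choose w hw hwG using fun n : N => n.2
  refine ⟨N, w, linearIndependent_of_notMem_span_image_Iio fun n hn => hwG n ?_, fun i => ?_⟩
  · refine span_le.2 (image_subset_iff.2 fun n' hn' => ?_) hn
    exact span_mono (image_mono (Iic_subset_Iio.2 hn')) (hw n').2
  refine le_antisymm ?_ (span_le.2 (image_subset_iff.2 fun n hn =>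
    ⟨(hw n).1, span_mono (image_mono (Iic_subset_Iic.2 hn)) (hw n).2⟩))
  induction i using WellFoundedLT.induction with | _ i ih
  rintro v ⟨hvW, hvF⟩
  obtain ⟨u, hu, hvu⟩ : ∃ u ∈ span K (w '' {n | (n : ι) ≤ i}), v - u ∈ span K (b '' Iio i) := by
    by_cases hi : i ∈ N
    · obtain ⟨a, ha⟩ := b.exists_sub_smul_mem_span_image_Iio hvF (hw ⟨i, hi⟩).2 (hwG ⟨i, hi⟩)
      exact ⟨a • w ⟨i, hi⟩, smul_mem _ _ (subset_span ⟨⟨i, hi⟩, le_rfl, rfl⟩), ha⟩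
    · refine ⟨0, zero_mem _, ?_⟩
      rw [sub_zero]
      by_contra hvG
      exact hi ⟨v, ⟨hvW, hvF⟩, hvG⟩
  have huW : u ∈ W := span_le.2 (image_subset_iff.2 fun n _ => (hw n).1) hu
  rw [← sub_add_cancel v u]
  refine add_mem ?_ hu
  rcases b.eq_zero_or_exists_mem_span_image_Iic hvu with h0 | ⟨j, hj, hvuj⟩
  · rw [h0]
    exact zero_mem _
  · exact span_mono (image_mono fun n hn => le_trans hn (le_of_lt hj))
      (ih j hj ⟨sub_mem hvW huW, hvuj⟩)

end Module.Basis

end EchelonBasis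

theorem Submodule.coe_mem_span_image_iff {R M : Type*} [Semiring R] [AddCommMonoid M]
    [Module R M] {W : Submodule R M} {ι : Type*} (g : ι → W) (s : Set ι) (x : W) :
    (x : M) ∈ span R ((fun i => (g i : M)) '' s) ↔ x ∈ span R (g '' s) := by
  rw [← image_image Subtype.val g s, ← W.coe_subtype, ← map_span, mem_map]
  exact ⟨fun ⟨y, hy, hyx⟩ => Subtype.ext hyx ▸ hy, fun hx => ⟨x, hx, rfl⟩⟩

section Triangularization

variable {k : Type u} {V : Type v} [Field k] [AddCommGroup V] [Module k V]

theorem mem_closure_endFunctionTopology_iff {s : Set (Module.End k V)} {T : Module.End k V} :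
    T ∈ @closure _ (endFunctionTopology k V) s ↔
      ∀ U : Submodule k V, FiniteDimensional k U → ∃ S ∈ s, ∀ x ∈ U, S x = T x := by
  let _ : TopologicalSpace V := ⊥
  have : DiscreteTopology V := ⟨rfl⟩
  rw [endFunctionTopology, closure_induced, mem_closure_iff_nhds_basis
    (by simpa only [nhds_pi, nhds_discrete] using Filter.hasBasis_pi_pure _)]
  simp only [Set.mem_image, exists_exists_and_eq_and]
  constructor
  · intro h U hU
    obtain ⟨I, hI, rfl⟩ := fg_def.1 (U.fg_iff_finiteDimensional.2 hU)
    obtain ⟨S, hS, hST⟩ := h I hI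
    exact ⟨S, hS, fun x hx => LinearMap.eqOn_span' hST hx⟩
  · intro h I hI
    obtain ⟨S, hS, hST⟩ := h (span k I) (FiniteDimensional.span_of_finite k hI)
    exact ⟨S, hS, fun x hx => hST x (subset_span hx)⟩

/-- Triangularizability of `T` restricted to `W`, phrased without the subtype `W`. -/
def TriangularizableOn (T : Module.End k V) (W : Submodule k V) : Prop :=
  ∃ (ι : Type v) (r : ι → ι → Prop) (c : ι → V), IsWellOrder ι r ∧ LinearIndependent k c ∧
    span k (range c) = W ∧ ∀ i, T (c i) ∈ span k (c '' {j | r j i ∨ j = i})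

theorem triangularizableOn_top_iff {T : Module.End k V} :
    TriangularizableOn T ⊤ ↔ Triangularizable T := by
  constructor
  · rintro ⟨ι, r, c, hr, hli, hspan, htri⟩
    refine ⟨ι, r, Module.Basis.mk hli hspan.ge, hr, ?_⟩
    simpa only [Module.Basis.coe_mk] using htri
  · rintro ⟨ι, r, b, hr, htri⟩
    exact ⟨ι, r, b, hr, b.linearIndependent, b.span_eq, htri⟩

theorem triangularizable_restrict_iff {T : Module.End k V} {W : Submodule k V}
    (hW : ∀ x ∈ W, T x ∈ W) : Triangularizable (T.restrict hW) ↔ TriangularizableOn T W := by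
  constructor
  · rintro ⟨ι, r, b, hr, htri⟩
    refine ⟨ι, r, fun i => b i, hr, b.linearIndependent.map' W.subtype W.ker_subtype, ?_,
      fun i => (coe_mem_span_image_iff b _ _).2 (htri i)⟩
    rw [← span_range_subtype_eq_top_iff W (fun i => (b i).2)]
    simp
  · rintro ⟨ι, r, c, hr, hli, hspan, htri⟩
    have hcW : ∀ i, c i ∈ W := fun i => hspan ▸ subset_span (mem_range_self i)
    have hli' : LinearIndependent k fun i => (⟨c i, hcW i⟩ : W) :=
      LinearIndependent.of_comp W.subtype hli
    refine ⟨ι, r, Module.Basis.mk hli' ((span_range_subtype_eq_top_iff W hcW).2 hspan).ge, hr,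
      fun i => ?_⟩
    rw [Module.Basis.coe_mk, ← coe_mem_span_image_iff]
    exact htri i

theorem Triangularizable.triangularizableOn {S : Module.End k V} (hS : Triangularizable S)
    {W : Submodule k V} (hW : ∀ x ∈ W, S x ∈ W) : TriangularizableOn S W := by
  obtain ⟨ι, r, b, hr, htri⟩ := hS
  let : LinearOrder ι := hr.linearOrder
  have : WellFoundedLT ι := ⟨hr.wf⟩
  have htri (i : ι) : S (b i) ∈ span k (b '' Iic i) := by
    convert htri i using 3
    ext j
    show j ≤ i ↔ j < i ∨ j = i
    exact le_iff_lt_or_eq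
  have hSF (i : ι) : span k (b '' Iic i) ≤ (span k (b '' Iic i)).comap S := by
    refine span_le.2 (image_subset_iff.2 fun j hj => ?_)
    exact span_mono (image_mono (Iic_subset_Iic.2 hj)) (htri j)
  obtain ⟨N, w, hli, hspan⟩ := b.exists_echelon W
  have hwF (n : N) : w n ∈ W ⊓ span k (b '' Iic n) :=
    (hspan n).ge (subset_span ⟨n, le_refl (n : ι), rfl⟩)
  refine ⟨N, (· < ·), w, inferInstance, hli, ?_, fun n => ?_⟩
  · refine le_antisymm (span_le.2 (range_subset_iff.2 fun n => (hwF n).1)) fun v hv => ?_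
    have hv' : v ∈ span k (b '' univ) := by simp [b.span_eq]
    rcases b.eq_zero_or_exists_mem_span_image_Iic hv' with rfl | ⟨i, -, hvi⟩
    · exact zero_mem _
    · exact span_mono (image_subset_range _ _) ((hspan i).le ⟨hv, hvi⟩)
  · simp only [← le_iff_lt_or_eq]
    exact (hspan n).le ⟨hW _ (hwF n).1, hSF n (hwF n).2⟩

theorem TriangularizableOn.mapsTo {T : Module.End k V} {W : Submodule k V}
    (h : TriangularizableOn T W) : ∀ x ∈ W, T x ∈ W := by
  obtain ⟨ι, r, c, -, -, rfl, htri⟩ := h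
  suffices span k (range c) ≤ (span k (range c)).comap T from fun x hx => this hx
  rw [span_le]
  rintro _ ⟨i, rfl⟩
  exact span_mono (image_subset_range _ _) (htri i)

theorem disjoint_map_sub_of_eqOn {f A : Module.End k V} {U : Submodule k V}
    (hA : ∀ x ∈ U, A x ∈ U) (hAf : ∀ x ∈ U ⊓ U.comap f, A x = f x) :
    Disjoint (U.map (f - A)) U := by
  rw [disjoint_def]
  rintro _ ⟨u, hu, rfl⟩ hfu
  have hfuU : f u ∈ U := by simpa using add_mem hfu (hA u hu)
  simp [hAf u ⟨hu, hfuU⟩]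

theorem TriangularizableOn.exists_extend {f A' : Module.End k V} {U E : Submodule k V}
    (hA' : TriangularizableOn A' U) (hle : U ≤ E) (hfE : ∀ x ∈ U, f x ∈ E)
    (hA'f : ∀ x ∈ U ⊓ U.comap f, A' x = f x) :
    ∃ A : Module.End k V, TriangularizableOn A E ∧ ∀ x ∈ U, A x = f x := by
  have hA'U := hA'.mapsTo
  obtain ⟨ι, r, c, hr, hli, hspan, htri⟩ := hA'
  obtain ⟨Z, hDZ, hZ⟩ := (disjoint_map_sub_of_eqOn hA'U hA'f).exists_isCompl
  have hDE : U.map (f - A') ≤ E :=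
    map_le_iff_le_comap.2 fun u hu => sub_mem (hfE u hu) (hle (hA'U u hu))
  obtain ⟨s, -, hs, hsli⟩ := exists_linearIndependent k ((Z ⊓ E : Submodule k V) : Set V)
  rw [span_eq] at hs
  let A : Module.End k V := LinearMap.ofIsCompl hZ.symm (f ∘ₗ U.subtype) 0
  have hAf : ∀ x ∈ U, A x = f x := fun x hx => LinearMap.ofIsCompl_apply_left hZ.symm ⟨x, hx⟩
  have := hr
  refine ⟨A, ⟨_, Sum.Lex WellOrderingRel r, Sum.elim ((↑) : s → V) c, inferInstance,
    hsli.sum_type hli ?_, ?_, ?_⟩, hAf⟩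
  · rw [Subtype.range_coe, hs, hspan]
    exact hZ.disjoint.mono_left inf_le_left
  · rw [Set.Sum.elim_range, span_union, Subtype.range_coe, hs, hspan, inf_comm,
      inf_sup_assoc_of_le _ hle, hZ.sup_eq_top, inf_top_eq]
  · rintro (j | i)
    · simp [A, LinearMap.ofIsCompl_apply_right hZ.symm ⟨j, (hs.le (subset_span j.2)).1⟩]
    · have hci : c i ∈ U := hspan ▸ subset_span (mem_range_self i)
      rw [Sum.elim_inr, hAf _ hci, ← sub_add_cancel (f (c i)) (A' (c i))]
      refine add_mem ?_ (span_mono ?_ (htri i))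
      · have hD : (f - A') (c i) ∈ span k s :=
          hs ▸ ⟨hDZ (mem_map_of_mem hci), hDE (mem_map_of_mem hci)⟩
        refine span_mono ?_ hD
        intro x hx
        exact ⟨Sum.inl ⟨x, hx⟩, Or.inl (Sum.Lex.sep _ _), rfl⟩
      · rintro _ ⟨j, hj, rfl⟩
        exact ⟨Sum.inr j, hj.imp Sum.Lex.inr (congrArg _), rfl⟩

theorem exists_triangularizableOn_eqOn {f : Module.End k V} {U E : Submodule k V}
    [FiniteDimensional k U] (hle : U ≤ E) (hfE : ∀ x ∈ U, f x ∈ E)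
    (h : ∀ W ≤ U, (∀ x ∈ W, f x ∈ W) → TriangularizableOn f W) :
    ∃ A : Module.End k V, TriangularizableOn A E ∧ ∀ x ∈ U, A x = f x := by
  induction hn : Module.finrank k U using Nat.strong_induction_on generalizing U E with
  | h n ih =>
  obtain ⟨A', hA', hA'f⟩ :
      ∃ A' : Module.End k V, TriangularizableOn A' U ∧ ∀ x ∈ U ⊓ U.comap f, A' x = f x := by
    rcases (inf_le_left : U ⊓ U.comap f ≤ U).eq_or_lt with heq | hlt
    · exact ⟨f, h U le_rfl fun x hx => (heq.ge hx).2, fun _ _ => rfl⟩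
    · exact ih _ (hn ▸ Submodule.finrank_lt_finrank_of_lt hlt) inf_le_left (fun x hx => hx.2)
        (fun W hW => h W (hW.trans inf_le_left)) rfl
  exact hA'.exists_extend hle hfE hA'f

end Triangularization

/-- `T` lies in the closure (in the function topology) of the set of triangularizable
transformations iff the restriction of `T` to every finite-dimensional `T`-invariant subspace
is triangularizable. -/
theorem mem_closure_triangularizable_iff
    {k : Type u} {V : Type v} [Field k] [AddCommGroup V] [Module k V]
    (T : Module.End k V) :
    T ∈ @closure _ (endFunctionTopology k V) {S : Module.End k V | Triangularizable S} ↔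
      ∀ (W : Submodule k V) (hW : ∀ v ∈ W, T v ∈ W), FiniteDimensional k W →
        Triangularizable (T.restrict hW) := by
  rw [mem_closure_endFunctionTopology_iff]
  constructor
  · intro h W hW hW_fd
    obtain ⟨S, hS, hST⟩ := h W hW_fd
    have hSW : ∀ x ∈ W, S x ∈ W := fun x hx => hST x hx ▸ hW x hx
    have hres : S.restrict hSW = T.restrict hW := LinearMap.ext fun x => Subtype.ext (hST x x.2)
    exact hres ▸ (triangularizable_restrict_iff hSW).2 (hS.triangularizableOn hSW)
  · intro h U hU
    obtain ⟨S, hS, hST⟩ :=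
      exists_triangularizableOn_eqOn (U := U) (E := ⊤) le_top (fun _ _ => mem_top) fun W hWU hW =>
        (triangularizable_restrict_iff hW).1 (h W hW (Submodule.finiteDimensional_of_le hWU))
    exact ⟨S, triangularizableOn_top_iff.1 hS, hST⟩
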